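/- Let T_{end,7} ∈ ℂ⁷⊗ℂ⁷⊗ℂ⁷ be the tensor whose space of slices T_{end,7}(A^*) ⊆ Mat₇(ℂ) consists of all matrices of the form x₁·Id₇ + N, where N has nonzero entries only in rows 5,6,7 and columns 1–4, given by: row 5 = (0, x₂+x₇, x₃, x₄), row 6 = (x₂, x₃, x₅, x₆), row 7 = (x₄, x₅, x₆, x₇), with x₁,…,x₇ ∈ ℂ arbitrary. Then T_{end,7}(A^*) is a commutative subalgebra-like space: it is closed under matrix multiplication (in fact the product of any two of the matrices N above is zero), yet T_{end,7}(A^*) contains no nonzero rank-one matrix, and consequently the border rank of T_{end,7} is at least 8. -/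

import Mathlib

open scoped BigOperators

noncomputable section

/-- A tensor in coordinates: an element of ℂ^a ⊗ ℂ^b ⊗ ℂ^c. -/
abbrev Tensor (a b c : ℕ) : Type := Fin a → Fin b → Fin c → ℂ

/-- `T` has rank at most `r`: it is a sum of `r` simple tensors. -/
def tensorRankLE {a b c : ℕ} (T : Tensor a b c) (r : ℕ) : Prop :=
  ∃ (u : Fin r → Fin a → ℂ) (v : Fin r → Fin b → ℂ) (w : Fin r → Fin c → ℂ),
    ∀ i j k, T i j k = ∑ s, u s i * v s j * w s k

/-- The rank of a tensor. -/
def tensorRank {a b c : ℕ} (T : Tensor a b c) : ℕ :=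
  sInf {r | tensorRankLE T r}

/-- The border rank of a tensor: the least `r` such that `T` is a limit of
tensors of rank at most `r`. -/
def borderRank {a b c : ℕ} (T : Tensor a b c) : ℕ :=
  sInf {r | T ∈ closure {S : Tensor a b c | tensorRankLE S r}}

/-- The tslice (contraction) of `T` at `α ∈ A^*`, as an element of `B ⊗ C`,
identified with a matrix. -/
def tslice {a b c : ℕ} (T : Tensor a b c) (α : Fin a → ℂ) :
    Matrix (Fin b) (Fin c) ℂ :=
  Matrix.of fun j k => ∑ i, α i * T i j k

def tsliceB {a b c : ℕ} (T : Tensor a b c) (β : Fin b → ℂ) :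
    Matrix (Fin a) (Fin c) ℂ :=
  Matrix.of fun i k => ∑ j, β j * T i j k

def tsliceC {a b c : ℕ} (T : Tensor a b c) (γ : Fin c → ℂ) :
    Matrix (Fin a) (Fin b) ℂ :=
  Matrix.of fun i j => ∑ k, γ k * T i j k

/-- `T` is `1_A`-generic: `T(A^*)` contains an invertible matrix. -/
def OneAGeneric {a m : ℕ} (T : Tensor a m m) : Prop :=
  ∃ α : Fin a → ℂ, IsUnit (tslice T α)

/-- The space `E_{α₀}(T) = { T(α) T(α₀)⁻¹ : α ∈ A^* } ⊆ End(B)`. -/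
def Espace {a m : ℕ} (T : Tensor a m m) (α₀ : Fin a → ℂ) :
    Set (Matrix (Fin m) (Fin m) ℂ) :=
  {X | ∃ α : Fin a → ℂ, X = tslice T α * (tslice T α₀)⁻¹}


/-- The tensor `T_{end,7}` (0-indexed): slices are `x₁·Id₇ + N` with `N`
supported in rows 5,6,7 and columns 1–4:
row 5 = (0, x₂+x₇, x₃, x₄), row 6 = (x₂, x₃, x₅, x₆), row 7 = (x₄, x₅, x₆, x₇). -/
def Tend7 : Tensor 7 7 7 := fun i j k =>
  (if i = 0 ∧ j = k then (1 : ℂ) else 0) +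
  (if i = 1 ∧ (j = 4 ∧ k = 1 ∨ j = 5 ∧ k = 0) then 1 else 0) +
  (if i = 2 ∧ (j = 4 ∧ k = 2 ∨ j = 5 ∧ k = 1) then 1 else 0) +
  (if i = 3 ∧ (j = 4 ∧ k = 3 ∨ j = 6 ∧ k = 0) then 1 else 0) +
  (if i = 4 ∧ (j = 5 ∧ k = 2 ∨ j = 6 ∧ k = 1) then 1 else 0) +
  (if i = 5 ∧ (j = 5 ∧ k = 3 ∨ j = 6 ∧ k = 2) then 1 else 0) +
  (if i = 6 ∧ (j = 4 ∧ k = 1 ∨ j = 6 ∧ k = 3) then 1 else 0)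

/-!
If `S = ∑_{s ≤ r} u_s ⊗ v_s ⊗ w_s` with `r < a`, some nonzero `α ∈ A^*` kills `u_1, …, u_r`,
so `S(α)` is a multiple of `v_0 ⊗ w_0`. Normalising `‖α‖ = 1`, the tensors having a unit `α`
with `rank S(α) ≤ 1` form a closed set (the sphere is compact and rank `≤ 1` is cut out by the
`2 × 2` minors), which therefore contains every tensor of border rank `≤ a`.
For `T_{end,7}` the slices are `α₀ • 1 + N(α)` with `N(α) N(β) = 0`, and the vanishing of a
few `2 × 2` minors of such a slice forces the coordinates of `α` to vanish one after another.
-/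

open Matrix

namespace Matrix

variable {m n K : Type*} [Fintype m] [Fintype n] [Field K]

theorem exists_eq_vecMulVec_of_rank_eq_one {M : Matrix m n K} (h : M.rank = 1) :
    ∃ u v, M = vecMulVec u v := by
  rw [rank_eq_finrank_span_cols, finrank_eq_one_iff'] at h
  obtain ⟨w, -, hw⟩ := h
  choose c hc using fun j => hw ⟨Mᵀ j, Submodule.subset_span (Set.mem_range_self j)⟩
  refine ⟨w, c, ext fun i j => ?_⟩
  have := congr_fun (congr_arg Subtype.val (hc j)) i
  simp only [SetLike.val_smul, Pi.smul_apply, smul_eq_mul, transpose_apply] at this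
  simp [vecMulVec_apply, ← this, mul_comm]

theorem exists_eq_vecMulVec_iff {M : Matrix m n K} :
    (∃ u v, M = vecMulVec u v) ↔ ∀ i j k l, M i j * M k l = M i l * M k j := by
  constructor
  · rintro ⟨u, v, rfl⟩ i j k l
    simp only [vecMulVec_apply]
    ring
  · intro h
    by_cases hM : M = 0
    · exact ⟨0, 0, by simp [hM]⟩
    obtain ⟨i₀, j₀, hij⟩ : ∃ i j, M i j ≠ 0 := by
      by_contra! h0
      exact hM (ext h0)
    refine ⟨fun i => M i j₀, fun j => M i₀ j / M i₀ j₀, ext fun i j => ?_⟩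
    rw [vecMulVec_apply, mul_div_assoc', eq_div_iff hij, h i j i₀ j₀]

theorem isClosed_setOf_exists_eq_vecMulVec [TopologicalSpace K] [ContinuousMul K]
    [T2Space K] : IsClosed {M : Matrix m n K | ∃ u v, M = vecMulVec u v} := by
  simp only [exists_eq_vecMulVec_iff, Set.ofPred_forall]
  refine isClosed_iInter fun i => isClosed_iInter fun j => isClosed_iInter fun k =>
    isClosed_iInter fun l => isClosed_eq ?_ ?_ <;> fun_prop

end Matrix

section Tensor

variable {a b c : ℕ}

theorem tensorRankLE.mono {T : Tensor a b c} {r r' : ℕ} (hT : tensorRankLE T r) (h : r ≤ r') :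
    tensorRankLE T r' := by
  obtain ⟨d, rfl⟩ := Nat.exists_eq_add_of_le h
  obtain ⟨u, v, w, hT⟩ := hT
  refine ⟨Fin.append u 0, Fin.append v 0, Fin.append w 0, fun i j k => ?_⟩
  simp [hT, Fin.sum_univ_add]

theorem tensorRankLE_mul (T : Tensor a b c) : tensorRankLE T (b * c) := by
  refine ⟨fun s i => T i (finProdFinEquiv.symm s).1 (finProdFinEquiv.symm s).2,
    fun s => Pi.single (finProdFinEquiv.symm s).1 1,
    fun s => Pi.single (finProdFinEquiv.symm s).2 1, fun i j k => ?_⟩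
  rw [← finProdFinEquiv.sum_comp, Fintype.sum_prod_type]
  simp [Pi.single_apply]

theorem tslice_smul (T : Tensor a b c) (t : ℂ) (α : Fin a → ℂ) :
    tslice T (t • α) = t • tslice T α := by
  ext j k
  simp [tslice, Finset.mul_sum, mul_assoc]

@[simp]
theorem tslice_zero (T : Tensor a b c) : tslice T 0 = 0 := by
  ext j k
  simp [tslice]

theorem continuous_tslice :
    Continuous fun p : Tensor a b c × (Fin a → ℂ) => tslice p.1 p.2 := by
  refine continuous_matrix fun j k => ?_
  simp only [tslice, of_apply]
  fun_prop

theorem tslice_eq_sum_vecMulVec {r : ℕ} (u : Fin r → Fin a → ℂ) (v : Fin r → Fin b → ℂ)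
    (w : Fin r → Fin c → ℂ) (α : Fin a → ℂ) :
    tslice (fun i j k => ∑ s, u s i * v s j * w s k) α
      = ∑ s, (∑ i, α i * u s i) • vecMulVec (v s) (w s) := by
  ext j k
  simp only [tslice, of_apply, Finset.mul_sum, Matrix.sum_apply, Matrix.smul_apply,
    vecMulVec_apply, smul_eq_mul, Finset.sum_mul]
  rw [Finset.sum_comm]
  simp only [mul_assoc]

theorem exists_tslice_eq_vecMulVec_of_tensorRankLE {S : Tensor a b c} {r : ℕ}
    (hS : tensorRankLE S (r + 1)) (hr : r < a) :
    ∃ α ≠ 0, ∃ u v, tslice S α = vecMulVec u v := by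
  obtain ⟨u, v, w, hS⟩ := hS
  obtain rfl : S = fun i j k => ∑ s, u s i * v s j * w s k := funext₃ hS
  let U : Matrix (Fin r) (Fin a) ℂ := of fun s => u s.succ
  have hker : LinearMap.ker U.mulVecLin ≠ ⊥ :=
    LinearMap.ker_ne_bot_of_finrank_lt (by simpa using hr)
  obtain ⟨α, hα, hα0⟩ := (Submodule.ne_bot_iff _).mp hker
  have hαU : ∀ s : Fin r, ∑ i, α i * u s.succ i = 0 := fun s => by
    simpa [U, mulVec, dotProduct, mul_comm] using congr_fun hα s
  refine ⟨α, hα0, (∑ i, α i * u 0 i) • v 0, w 0, ?_⟩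
  rw [tslice_eq_sum_vecMulVec, Fin.sum_univ_succ]
  simp [hαU]

theorem isClosed_setOf_exists_tslice_eq_vecMulVec :
    IsClosed {S : Tensor a b c |
      ∃ α ∈ Metric.sphere (0 : Fin a → ℂ) 1, ∃ u v, tslice S α = vecMulVec u v} := by
  have hclosed : IsClosed {p : Tensor a b c × Metric.sphere (0 : Fin a → ℂ) 1 |
      ∃ u v, tslice p.1 p.2 = vecMulVec u v} :=
    isClosed_setOf_exists_eq_vecMulVec.preimage
      (continuous_tslice.comp (continuous_fst.prodMk (continuous_subtype_val.comp continuous_snd)))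
  convert isClosedMap_fst_of_compactSpace _ hclosed using 1
  ext S
  simp

theorem tensorRankLE_subset_setOf_exists_tslice_eq_vecMulVec {r : ℕ} (hr : r ≤ a) (ha : 0 < a) :
    {S : Tensor a b c | tensorRankLE S r} ⊆
      {S | ∃ α ∈ Metric.sphere (0 : Fin a → ℂ) 1, ∃ u v, tslice S α = vecMulVec u v} := by
  intro S hS
  obtain ⟨a', rfl⟩ := Nat.exists_eq_succ_of_ne_zero ha.ne'
  obtain ⟨α, hα, u, v, hS⟩ :=
    exists_tslice_eq_vecMulVec_of_tensorRankLE (hS.mono hr) (Nat.lt_succ_self a')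
  refine ⟨(‖α‖⁻¹ : ℂ) • α, mem_sphere_zero_iff_norm.mpr (norm_smul_inv_norm hα),
    (‖α‖⁻¹ : ℂ) • u, v, ?_⟩
  rw [tslice_smul, hS, smul_vecMulVec]

theorem le_borderRank_of_tslice_eq_vecMulVec {T : Tensor a b c} (ha : 0 < a)
    (hT : ∀ α u v, tslice T α = vecMulVec u v → α = 0) : a + 1 ≤ borderRank T := by
  refine le_csInf ⟨b * c, subset_closure (tensorRankLE_mul T)⟩ fun r hr => ?_
  by_contra! hra
  obtain ⟨α, hα, u, v, hTα⟩ := closure_minimal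
    (tensorRankLE_subset_setOf_exists_tslice_eq_vecMulVec (Nat.lt_succ_iff.mp hra) ha)
    isClosed_setOf_exists_tslice_eq_vecMulVec hr
  simp [hT α u v hTα] at hα

end Tensor

namespace Tend7

def nilpotentPart (α : Fin 7 → ℂ) : Matrix (Fin 7) (Fin 7) ℂ :=
  !![0, 0, 0, 0, 0, 0, 0;
     0, 0, 0, 0, 0, 0, 0;
     0, 0, 0, 0, 0, 0, 0;
     0, 0, 0, 0, 0, 0, 0;
     0, α 1 + α 6, α 2, α 3, 0, 0, 0;
     α 1, α 2, α 4, α 5, 0, 0, 0;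
     α 3, α 4, α 5, α 6, 0, 0, 0]

theorem tslice_eq (α : Fin 7 → ℂ) : tslice Tend7 α = α 0 • 1 + nilpotentPart α := by
  ext j k
  fin_cases j <;> fin_cases k <;>
    simp [tslice, Tend7, nilpotentPart, Fin.sum_univ_seven, one_apply]

theorem nilpotentPart_mul_nilpotentPart (α β : Fin 7 → ℂ) :
    nilpotentPart α * nilpotentPart β = 0 := by
  ext j k
  fin_cases j <;> fin_cases k <;> simp [nilpotentPart, mul_apply, Fin.sum_univ_seven]

theorem tslice_mul_tslice (α β : Fin 7 → ℂ) :
    tslice Tend7 α * tslice Tend7 β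
      = (α 0 * β 0) • 1 + (α 0 • nilpotentPart β + β 0 • nilpotentPart α) := by
  simp only [tslice_eq, add_mul, mul_add, nilpotentPart_mul_nilpotentPart, smul_mul_assoc,
    mul_smul_comm, one_mul, mul_one, add_zero]
  module

theorem tslice_mul_tslice_eq_tslice (α β : Fin 7 → ℂ) :
    tslice Tend7 α * tslice Tend7 β
      = tslice Tend7 (Function.update (α 0 • β + β 0 • α) 0 (α 0 * β 0)) := by
  rw [tslice_mul_tslice, tslice_eq, Function.update_self]
  congr 1
  ext j k
  fin_cases j <;> fin_cases k <;> simp [nilpotentPart, mul_add, add_add_add_comm, mul_comm]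

theorem eq_zero_of_tslice_eq_vecMulVec {α : Fin 7 → ℂ} {u v : Fin 7 → ℂ}
    (h : tslice Tend7 α = vecMulVec u v) : α = 0 := by
  have hminor := exists_eq_vecMulVec_iff.mp ⟨u, v, h⟩
  simp only [tslice_eq] at hminor
  have m0011 := hminor 0 0 1 1
  have m6043 := hminor 6 0 4 3
  have m5063 := hminor 5 0 6 3
  have m5041 := hminor 5 0 4 1
  have m6341 := hminor 6 3 4 1
  have m5142 := hminor 5 1 4 2
  have m5362 := hminor 5 3 6 2
  have m5261 := hminor 5 2 6 1
  simp [nilpotentPart, one_apply, -mul_eq_zero]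
    at m0011 m6043 m5063 m5041 m6341 m5142 m5362 m5261
  have hα0 : α 0 = 0 := mul_self_eq_zero.mp (by linear_combination m0011)
  have hα3 : α 3 = 0 := mul_self_eq_zero.mp (by linear_combination m6043)
  have hα1 : α 1 = 0 := mul_self_eq_zero.mp (by linear_combination m5041 - m5063 - α 5 * hα3)
  have hα6 : α 6 = 0 := mul_self_eq_zero.mp (by linear_combination m6341 + α 4 * hα3 - α 6 * hα1)
  have hα2 : α 2 = 0 := mul_self_eq_zero.mp (by linear_combination m5142 + α 4 * (hα1 + hα6))
  have hα5 : α 5 = 0 := mul_self_eq_zero.mp (by linear_combination m5362 + α 4 * hα6)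
  have hα4 : α 4 = 0 := mul_self_eq_zero.mp (by linear_combination m5261 + α 5 * hα2)
  ext i
  fin_cases i <;> assumption

theorem tslice_rank_ne_one (α : Fin 7 → ℂ) : (tslice Tend7 α).rank ≠ 1 := by
  intro hr
  obtain ⟨u, v, h⟩ := exists_eq_vecMulVec_of_rank_eq_one hr
  obtain rfl := eq_zero_of_tslice_eq_vecMulVec h
  simp at hr

end Tend7

/-- The space of slices of `T_{end,7}` is commutative and closed under matrix
multiplication (indeed the product of any two of the nilpotent parts `N` is
zero), yet it contains no nonzero rank-one matrix, and consequently
`R̲(T_{end,7}) ≥ 8`. -/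
theorem stmt9 :
    (∀ α β : Fin 7 → ℂ, tslice Tend7 α * tslice Tend7 β
        = tslice Tend7 β * tslice Tend7 α) ∧
    (∀ α β : Fin 7 → ℂ, ∃ γ : Fin 7 → ℂ,
      tslice Tend7 α * tslice Tend7 β = tslice Tend7 γ) ∧
    (∀ α β : Fin 7 → ℂ, α 0 = 0 → β 0 = 0 →
      tslice Tend7 α * tslice Tend7 β = 0) ∧
    (∀ α : Fin 7 → ℂ, (tslice Tend7 α).rank ≠ 1) ∧
    8 ≤ borderRank Tend7 := by
  refine ⟨fun α β => ?_, fun α β => ⟨_, Tend7.tslice_mul_tslice_eq_tslice α β⟩,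
    fun α β hα hβ => ?_, Tend7.tslice_rank_ne_one,
    le_borderRank_of_tslice_eq_vecMulVec (by norm_num) fun α u v h =>
      Tend7.eq_zero_of_tslice_eq_vecMulVec h⟩
  · rw [Tend7.tslice_mul_tslice, Tend7.tslice_mul_tslice]
    module
  · simp [Tend7.tslice_mul_tslice, hα, hβ]

end
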